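/- Let k be a field of characteristic p, G a finite group, and V a finite-dimensional kG-module with stable endomorphism ring isomorphic to k. Let R be an Artinian local commutative ring with residue field k and let (M, φ) be a lift of V over R (M a finite free R-module with G-action, φ : k ⊗_R M ≅ V equivariant). Then the natural ring homomorphism R → End_{RG}(M)/PEnd_{RG}(M) given by scalar multiplication is surjective. -/

import Mathlib

/-- An endomorphism of a module over a ring `A` factors through a projective `A`-module. -/
def FactorsThroughProjective (A : Type) [Ring A] {M : Type} [AddCommGroup M] [Module A M]
    (f : M →ₗ[A] M) : Prop :=
  ∃ (P : Type) (_ : AddCommGroup P) (_ : Module A P),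
    Module.Projective A P ∧ ∃ (α : M →ₗ[A] P) (β : P →ₗ[A] M), f = β.comp α

/-- The stable endomorphism ring `End_A(M)/PEnd_A(M)` is isomorphic to `k`. -/
def StableEndTrivial (k : Type) [Field k] (A : Type) [Ring A] (M : Type) [AddCommGroup M]
    [Module k M] [Module A M] [SMulCommClass A k M] : Prop :=
  (¬ FactorsThroughProjective A (LinearMap.id : M →ₗ[A] M)) ∧
  ∀ f : M →ₗ[A] M, ∃ a : k, FactorsThroughProjective A (f - a • LinearMap.id)

/-!
Induct on the ideal `J` of the Artinian ring `R` such that `h` maps `M` into `J • M`. If `J ≠ 0`,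
pick `J' ⋖ J` and `x ∈ J \ J'`; then `x * c ∈ J'` exactly when `c ∈ 𝔪`, so `h = x • C` modulo
`J' • M`, and `C` reduces to a `kG`-endomorphism `W` of `V`. By hypothesis `W - a` factors through
a projective, hence (Higman's criterion) is a relative trace `Tr u = ∑ g⁻¹ u g`. Lifting `a` and
`u` to `R` and `M`, `h - x • (a + Tr u)` maps `M` into `J' • M`, and `x • Tr u` is the relative
trace of an endomorphism of the `R`-free module `M`, so it factors through a free
`R[G]`-module.
-/

open IsLocalRing MonoidAlgebra

namespace LinearMap

section RelativeTrace

variable {k : Type*} [CommRing k] {G : Type*} [Group G] [Fintype G]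
variable {V V' W W' : Type*}
  [AddCommGroup V] [Module k V] [Module k[G] V] [IsScalarTower k k[G] V]
  [AddCommGroup V'] [Module k V'] [Module k[G] V'] [IsScalarTower k k[G] V']
  [AddCommGroup W] [Module k W] [Module k[G] W] [IsScalarTower k k[G] W]
  [AddCommGroup W'] [Module k W'] [Module k[G] W'] [IsScalarTower k k[G] W']

theorem comp_sumOfConjugatesEquivariant (π : W →ₗ[k] V) (f : V →ₗ[k[G]] V') :
    (f.restrictScalars k ∘ₗ π).sumOfConjugatesEquivariant G =
      f ∘ₗ π.sumOfConjugatesEquivariant G := by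
  ext w
  simp [sumOfConjugatesEquivariant_apply, conjugate_apply]

theorem sumOfConjugatesEquivariant_comp (π : W →ₗ[k] V) (f : W' →ₗ[k[G]] W) :
    (π ∘ₗ f.restrictScalars k).sumOfConjugatesEquivariant G =
      π.sumOfConjugatesEquivariant G ∘ₗ f := by
  ext w
  simp [sumOfConjugatesEquivariant_apply, conjugate_apply]

theorem sumOfConjugatesEquivariant_smul_apply (r : k) (π : W →ₗ[k] V) (w : W) :
    (r • π).sumOfConjugatesEquivariant G w = r • π.sumOfConjugatesEquivariant G w := by
  simp [sumOfConjugatesEquivariant_apply, conjugate_apply, Finset.smul_sum, smul_algebra_smul_comm]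

theorem exists_sumOfConjugatesEquivariant_eq_id (ι : Type*) :
    ∃ π : (ι →₀ k[G]) →ₗ[k] (ι →₀ k[G]), π.sumOfConjugatesEquivariant G = LinearMap.id := by
  classical
  -- coordinatewise projection of `k[G]` onto `k • 1`
  refine ⟨Finsupp.mapRange.linearMap
    (lsingle (1 : G) ∘ₗ Finsupp.lapply 1 ∘ₗ (coeffLinearEquiv k).toLinearMap), ?_⟩
  ext t : 2
  simp only [coe_comp, Function.comp_apply, Finsupp.lsingle_apply, sumOfConjugatesEquivariant_apply,
    conjugate_apply, Finsupp.smul_single, smul_eq_mul, mul_one, Finsupp.mapRange.linearMap_apply,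
    LinearEquiv.coe_coe, Finsupp.mapRange_single, coeffLinearEquiv_apply, coeff_single,
    Finsupp.lapply_apply, lsingle_apply, single_mul_single, one_mul, id_comp]
  rw [Finset.sum_eq_single 1 (fun g _ hg => by simp [hg]) (by simp)]
  simp [one_def]

end RelativeTrace

end LinearMap

namespace FactorsThroughProjective

variable {A : Type} [Ring A] {M : Type} [AddCommGroup M] [Module A M]

theorem zero : FactorsThroughProjective A (0 : M →ₗ[A] M) :=
  ⟨PUnit, inferInstance, inferInstance, inferInstance, 0, 0, rfl⟩

theorem add {f g : M →ₗ[A] M} (hf : FactorsThroughProjective A f)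
    (hg : FactorsThroughProjective A g) : FactorsThroughProjective A (f + g) := by
  obtain ⟨P, _, _, _, α, β, rfl⟩ := hf
  obtain ⟨Q, _, _, _, γ, δ, rfl⟩ := hg
  exact ⟨P × Q, inferInstance, inferInstance, inferInstance, α.prod γ, β.coprod δ, by ext; simp⟩

end FactorsThroughProjective

section Higman

variable {k : Type} [CommRing k] {G : Type} [Group G] [Fintype G]
  {V : Type} [AddCommGroup V] [Module k V] [Module k[G] V] [IsScalarTower k k[G] V]

theorem FactorsThroughProjective.exists_sumOfConjugatesEquivariant_eq {f : V →ₗ[k[G]] V}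
    (hf : FactorsThroughProjective k[G] f) :
    ∃ π : V →ₗ[k] V, π.sumOfConjugatesEquivariant G = f := by
  obtain ⟨P, _, _, hP, α, β, rfl⟩ := hf
  obtain ⟨s, hs⟩ := Module.projective_def.mp hP
  obtain ⟨π, hπ⟩ := LinearMap.exists_sumOfConjugatesEquivariant_eq_id (k := k) (G := G) P
  set q : (P →₀ k[G]) →ₗ[k[G]] P := Finsupp.linearCombination k[G] id
  refine ⟨(β ∘ₗ q).restrictScalars k ∘ₗ π ∘ₗ (s ∘ₗ α).restrictScalars k, ?_⟩
  rw [LinearMap.comp_sumOfConjugatesEquivariant, LinearMap.sumOfConjugatesEquivariant_comp, hπ]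
  ext v
  simp [q, hs (α v)]

theorem factorsThroughProjective_sumOfConjugatesEquivariant [Module.Free k V] (π : V →ₗ[k] V) :
    FactorsThroughProjective k[G] (π.sumOfConjugatesEquivariant G) := by
  classical
  set b := Module.Free.chooseBasis k V
  set q : (_ →₀ k[G]) →ₗ[k[G]] V := Finsupp.linearCombination k[G] b
  set s : V →ₗ[k] (_ →₀ k[G]) := b.constr k fun i => Finsupp.single i 1
  have hqs : q.restrictScalars k ∘ₗ s = LinearMap.id := b.ext fun i => by simp [q, s]
  refine ⟨_, inferInstance, inferInstance, inferInstance,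
    (s ∘ₗ π).sumOfConjugatesEquivariant G, q, ?_⟩
  rw [← LinearMap.comp_sumOfConjugatesEquivariant, ← LinearMap.comp_assoc, hqs, LinearMap.id_comp]

end Higman

namespace Ideal

variable {R : Type*} [CommRing R] {J J' : Ideal R} {x : R}

theorem sup_span_singleton_eq_of_covBy (hJ : J' ⋖ J) (hxJ : x ∈ J) (hxJ' : x ∉ J') :
    J' ⊔ span {x} = J :=
  (hJ.eq_or_eq le_sup_left (sup_le hJ.le (span_singleton_le_iff_mem J |>.mpr hxJ))).resolve_left
    fun h => hxJ' (h ▸ Submodule.mem_sup_right (mem_span_singleton_self x))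

variable [IsLocalRing R]

theorem mul_mem_iff_mem_maximalIdeal_of_covBy (hJ : J' ⋖ J) (hxJ : x ∈ J) (hxJ' : x ∉ J')
    (c : R) : x * c ∈ J' ↔ c ∈ maximalIdeal R := by
  constructor
  · intro hc
    by_contra hcm
    obtain ⟨u, rfl⟩ := notMem_maximalIdeal.mp hcm
    exact hxJ' (by simpa using J'.mul_mem_right ↑u⁻¹ hc)
  · intro hc
    by_contra hxc
    have hx : x ∈ J' ⊔ span {x * c} := by
      rw [sup_span_singleton_eq_of_covBy hJ (J.mul_mem_right c hxJ) hxc]; exact hxJ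
    obtain ⟨a, ha, _, hb, hab⟩ := Submodule.mem_sup.mp hx
    obtain ⟨r, rfl⟩ := mem_span_singleton'.mp hb
    obtain ⟨u, hu⟩ := isUnit_one_sub_self_of_mem_nonunits (r * c)
      (mul_mem_left _ r hc : r * c ∈ maximalIdeal R)
    have : x * (1 - r * c) ∈ J' := by rwa [show x * (1 - r * c) = a by linear_combination -hab]
    rw [← hu] at this
    exact hxJ' (by simpa using J'.mul_mem_right ↑u⁻¹ this)

theorem maximalIdeal_mul_le_of_covBy (hJ : J' ⋖ J) : maximalIdeal R * J ≤ J' := by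
  obtain ⟨x, hxJ, hxJ'⟩ := SetLike.exists_of_lt hJ.lt
  rw [← sup_span_singleton_eq_of_covBy hJ hxJ hxJ', mul_sup]
  refine sup_le mul_le_right (mul_le.mpr fun r hr s hs => ?_)
  obtain ⟨t, rfl⟩ := mem_span_singleton'.mp hs
  rw [show r * (t * x) = x * (t * r) by ring]
  exact (mul_mem_iff_mem_maximalIdeal_of_covBy hJ hxJ hxJ' _).mpr (mul_mem_left _ t hr)

end Ideal

theorem Module.Basis.mem_ideal_smul_top_iff {ι R M : Type*} [CommRing R] [AddCommGroup M]
    [Module R M] (b : Basis ι R M) (J : Ideal R) (m : M) :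
    m ∈ J • (⊤ : Submodule R M) ↔ ∀ i, b.repr m i ∈ J := by
  rw [← b.span_eq, Submodule.mem_ideal_smul_span_iff_exists_sum]
  constructor
  · rintro ⟨a, ha, rfl⟩ i
    simpa [← Finsupp.linearCombination_apply] using ha i
  · exact fun hm => ⟨b.repr m, hm, by simp [← Finsupp.linearCombination_apply]⟩

namespace Module.Free

variable {R M N : Type*} [CommRing R] [AddCommGroup M] [Module R M] [Module.Free R M]
  [AddCommGroup N] [Module R N]

theorem smul_mem_ideal_smul_top_iff {x : R} {K L : Ideal R} (hx : ∀ r, x * r ∈ K ↔ r ∈ L)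
    (m : M) : x • m ∈ K • (⊤ : Submodule R M) ↔ m ∈ L • (⊤ : Submodule R M) := by
  simp [(chooseBasis R M).mem_ideal_smul_top_iff, hx]

theorem exists_linearMap_sub_smul_mem (f : M →ₗ[R] N) {K : Ideal R} {x : R}
    (hf : ∀ m, f m ∈ (K ⊔ Ideal.span {x}) • (⊤ : Submodule R N)) :
    ∃ C : M →ₗ[R] N, ∀ m, f m - x • C m ∈ K • (⊤ : Submodule R N) := by
  set b := chooseBasis R M
  have hdiv : ∀ i, ∃ c, f (b i) - x • c ∈ K • (⊤ : Submodule R N) := fun i => by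
    have := hf (b i)
    rw [Submodule.sup_smul, Submodule.ideal_span_singleton_smul] at this
    obtain ⟨y, hy, _, ⟨c, -, rfl⟩, hyc⟩ := Submodule.mem_sup.mp this
    exact ⟨c, by rw [← hyc]; simpa using hy⟩
  choose c hc using hdiv
  refine ⟨b.constr R c, fun m => ?_⟩
  have : (K • ⊤ : Submodule R N).comap (f - x • b.constr R c) = ⊤ :=
    eq_top_iff.mpr <| b.span_eq ▸ Submodule.span_le.mpr <| by rintro _ ⟨i, rfl⟩; simpa using hc i
  simpa using this.ge (Submodule.mem_top (x := m))

end Module.Free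

section Semilinear

variable {R k M N V V' : Type*} [CommRing R] [CommRing k] {σ : R →+* k}
  [AddCommGroup M] [Module R M] [AddCommGroup N] [Module R N]
  [AddCommGroup V] [Module k V] [AddCommGroup V'] [Module k V']

theorem LinearMap.exists_comp_eq_comp_of_surjective (hσ : Function.Surjective σ)
    {φ : M →ₛₗ[σ] V} (hφ : Function.Surjective φ) (ψ : N →ₛₗ[σ] V') (C : M →ₗ[R] N)
    (hC : ∀ m, φ m = 0 → ψ (C m) = 0) : ∃ W : V →ₗ[k] V', ∀ m, W (φ m) = ψ (C m) := by
  have hwd : ∀ m m', φ m = φ m' → ψ (C m) = ψ (C m') := fun m m' h =>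
    sub_eq_zero.mp (by simpa using hC (m - m') (by simp [h]))
  have hs := Function.surjInv_eq hφ
  refine ⟨{ toFun := fun v => ψ (C (Function.surjInv hφ v)), map_add' := ?_, map_smul' := ?_ },
    fun m => hwd _ _ (hs _)⟩
  · intro v w
    simp only [← map_add]
    exact hwd _ _ (by simp [hs])
  · intro a v
    obtain ⟨r, rfl⟩ := hσ a
    simp only [RingHom.id_apply, ← map_smulₛₗ ψ, ← map_smul C]
    exact hwd _ _ (by simp [hs])

theorem Module.Free.exists_lift [Module.Free R M] {φ : N →ₛₗ[σ] V} (hφ : Function.Surjective φ)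
    (f : M →ₛₗ[σ] V) : ∃ U : M →ₗ[R] N, ∀ m, φ (U m) = f m := by
  set b := chooseBasis R M
  refine ⟨b.constr R fun i => Function.surjInv hφ (f (b i)), fun m => ?_⟩
  refine LinearMap.congr_fun (b.ext (f₁ := φ ∘ₛₗ _) fun i => ?_) m
  simp [Function.surjInv_eq hφ]

end Semilinear

theorem LinearMap.map_sumOfConjugatesEquivariant {R k G M V : Type*} [CommRing R] [CommRing k]
    [Group G] [Fintype G] {σ : R →+* k}
    [AddCommGroup M] [Module R M] [Module R[G] M] [IsScalarTower R R[G] M]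
    [AddCommGroup V] [Module k V] [Module k[G] V] [IsScalarTower k k[G] V]
    {φ : M →ₛₗ[σ] V} (hφ : ∀ (g : G) (m : M), φ (of R G g • m) = of k G g • φ m)
    {U : M →ₗ[R] M} {u : V →ₗ[k] V} (hU : ∀ m, φ (U m) = u (φ m)) (m : M) :
    φ (U.sumOfConjugatesEquivariant G m) = u.sumOfConjugatesEquivariant G (φ m) := by
  simp [sumOfConjugatesEquivariant_apply, conjugate_apply, ← of_apply, hφ, hU]

section Lift

variable {k : Type} [Field k] {G : Type} [Group G]
  {V : Type} [AddCommGroup V] [Module k V] [Module k[G] V] [IsScalarTower k k[G] V]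
  {R : Type} [CommRing R] [IsLocalRing R] {πR : R →+* k}
  {M : Type} [AddCommGroup M] [Module R M] [Module R[G] M] [IsScalarTower R R[G] M]
  [Module.Free R M] {φ : M →ₛₗ[πR] V}

theorem exists_sub_smul_mem_and_descends_of_covBy (hπsurj : Function.Surjective πR)
    (hφsurj : Function.Surjective φ)
    (hφker : ∀ m : M, φ m = 0 ↔ m ∈ maximalIdeal R • (⊤ : Submodule R M))
    (hφequiv : ∀ (g : G) (m : M), φ (of R G g • m) = of k G g • φ m)
    {J J' : Ideal R} (hJ : J' ⋖ J) {x : R} (hxJ : x ∈ J) (hxJ' : x ∉ J')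
    (h : M →ₗ[R[G]] M) (hh : ∀ m, h m ∈ J • (⊤ : Submodule R M)) :
    ∃ (C : M →ₗ[R] M) (W : V →ₗ[k[G]] V),
      (∀ m, h m - x • C m ∈ J' • (⊤ : Submodule R M)) ∧ ∀ m, W (φ m) = φ (C m) := by
  have hdiv : ∀ c : M, x • c ∈ J' • (⊤ : Submodule R M) → φ c = 0 := fun c hc =>
    (hφker c).mpr <| (Module.Free.smul_mem_ideal_smul_top_iff
      (Ideal.mul_mem_iff_mem_maximalIdeal_of_covBy hJ hxJ hxJ') c).mp hc
  have hmJ : ∀ m ∈ maximalIdeal R • (⊤ : Submodule R M), h m ∈ J' • (⊤ : Submodule R M) := by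
    intro m hm
    have : (maximalIdeal R • ⊤ : Submodule R M).map (h.restrictScalars R) ≤
        (maximalIdeal R * J) • ⊤ := by
      rw [Submodule.map_smul'', Submodule.mul_smul]
      exact smul_mono_right _ (Submodule.map_le_iff_le_comap.mpr fun m _ => hh m)
    exact Submodule.smul_mono_left (Ideal.maximalIdeal_mul_le_of_covBy hJ) (this ⟨m, hm, rfl⟩)
  rw [← Ideal.sup_span_singleton_eq_of_covBy hJ hxJ hxJ'] at hh
  obtain ⟨C, hC⟩ := Module.Free.exists_linearMap_sub_smul_mem (h.restrictScalars R) hh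
  have hker : ∀ m, φ m = 0 → φ (C m) = 0 := fun m hm =>
    hdiv _ (by simpa using Submodule.sub_mem _ (hmJ m ((hφker m).mp hm)) (hC m))
  obtain ⟨W, hW⟩ := LinearMap.exists_comp_eq_comp_of_surjective hπsurj hφsurj φ C hker
  have hequiv : ∀ (g : G) (v : V), W (single g (1 : k) • v) = single g (1 : k) • W v := by
    intro g v
    obtain ⟨m, rfl⟩ := hφsurj v
    rw [← of_apply, ← hφequiv, hW, hW, ← hφequiv, ← sub_eq_zero, ← map_sub]
    refine hdiv _ ?_
    have : x • (C (of R G g • m) - of R G g • C m) =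
        of R G g • (h m - x • C m) - (h (of R G g • m) - x • C (of R G g • m)) := by
      rw [map_smul h, smul_sub, smul_sub, smul_algebra_smul_comm]; abel
    rw [this]
    exact Submodule.sub_mem _
      (Submodule.smul_top_le_comap_smul_top _ (GroupSMul.linearMap R M g) (hC m)) (hC _)
  exact ⟨C, equivariantOfLinearOfComm W hequiv, hC, hW⟩

theorem exists_sub_smul_sub_sumOfConjugatesEquivariant_mem_of_covBy [Fintype G]
    [SMulCommClass k[G] k V]
    (hV : ∀ f : V →ₗ[k[G]] V, ∃ a : k, FactorsThroughProjective k[G] (f - a • LinearMap.id))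
    (hπsurj : Function.Surjective πR) (hφsurj : Function.Surjective φ)
    (hφker : ∀ m : M, φ m = 0 ↔ m ∈ maximalIdeal R • (⊤ : Submodule R M))
    (hφequiv : ∀ (g : G) (m : M), φ (of R G g • m) = of k G g • φ m)
    {J J' : Ideal R} (hJ : J' ⋖ J) {x : R} (hxJ : x ∈ J) (hxJ' : x ∉ J')
    (h : M →ₗ[R[G]] M) (hh : ∀ m, h m ∈ J • (⊤ : Submodule R M)) :
    ∃ (r : R) (U : M →ₗ[R] M), ∀ m,
      h m - r • m - U.sumOfConjugatesEquivariant G m ∈ J' • (⊤ : Submodule R M) := by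
  obtain ⟨C, W, hC, hW⟩ :=
    exists_sub_smul_mem_and_descends_of_covBy hπsurj hφsurj hφker hφequiv hJ hxJ hxJ' h hh
  obtain ⟨a, ha⟩ := hV W
  obtain ⟨u, hu⟩ := ha.exists_sumOfConjugatesEquivariant_eq
  obtain ⟨U, hU⟩ := Module.Free.exists_lift hφsurj (u ∘ₛₗ φ)
  obtain ⟨r, rfl⟩ := hπsurj a
  refine ⟨x * r, x • U, fun m => ?_⟩
  have hres : C m - r • m - U.sumOfConjugatesEquivariant G m ∈
      maximalIdeal R • (⊤ : Submodule R M) := by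
    rw [← hφker, map_sub, map_sub, LinearMap.map_sumOfConjugatesEquivariant hφequiv hU, hu, ← hW]
    simp
  have := (Module.Free.smul_mem_ideal_smul_top_iff
      (Ideal.mul_mem_iff_mem_maximalIdeal_of_covBy hJ hxJ hxJ') _).mpr hres
  convert Submodule.add_mem _ (hC m) this using 1
  rw [LinearMap.sumOfConjugatesEquivariant_smul_apply, mul_smul]
  simp only [smul_sub]
  abel

theorem exists_sub_smul_id_factorsThroughProjective [IsArtinianRing R] [Fintype G]
    [SMulCommClass k[G] k V] [SMulCommClass R[G] R M]
    (hV : ∀ f : V →ₗ[k[G]] V, ∃ a : k, FactorsThroughProjective k[G] (f - a • LinearMap.id))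
    (hπsurj : Function.Surjective πR) (hφsurj : Function.Surjective φ)
    (hφker : ∀ m : M, φ m = 0 ↔ m ∈ maximalIdeal R • (⊤ : Submodule R M))
    (hφequiv : ∀ (g : G) (m : M), φ (of R G g • m) = of k G g • φ m)
    (J : Ideal R) (h : M →ₗ[R[G]] M) (hh : ∀ m, h m ∈ J • (⊤ : Submodule R M)) :
    ∃ r : R, FactorsThroughProjective R[G] (h - r • LinearMap.id) := by
  induction J using WellFoundedLT.induction generalizing h with
  | ind J ih =>
  rcases eq_or_ne J ⊥ with rfl | hJ
  · have : h = 0 := LinearMap.ext fun m => by simpa using hh m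
    exact ⟨0, by simpa [this] using FactorsThroughProjective.zero⟩
  obtain ⟨J', -, hJ'⟩ := exists_le_covBy_of_lt (bot_lt_iff_ne_bot.mpr hJ)
  obtain ⟨x, hxJ, hxJ'⟩ := SetLike.exists_of_lt hJ'.lt
  obtain ⟨r, U, hU⟩ := exists_sub_smul_sub_sumOfConjugatesEquivariant_mem_of_covBy
    hV hπsurj hφsurj hφker hφequiv hJ' hxJ hxJ' h hh
  obtain ⟨r', hr'⟩ := ih J' hJ'.lt (h - r • LinearMap.id - U.sumOfConjugatesEquivariant G) hU
  refine ⟨r + r', ?_⟩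
  rw [show h - (r + r') • LinearMap.id = h - r • LinearMap.id - U.sumOfConjugatesEquivariant G -
    r' • LinearMap.id + U.sumOfConjugatesEquivariant G by rw [add_smul]; abel]
  exact hr'.add (factorsThroughProjective_sumOfConjugatesEquivariant U)

end Lift

theorem scalar_action_surjects_onto_stable_end_general
    (k : Type) [Field k]
    (G : Type) [Group G] [Fintype G]
    (V : Type) [AddCommGroup V] [Module k V] [Module (MonoidAlgebra k G) V]
    [IsScalarTower k (MonoidAlgebra k G) V] [SMulCommClass (MonoidAlgebra k G) k V]
    (hV : StableEndTrivial k (MonoidAlgebra k G) V)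
    (R : Type) [CommRing R] [IsLocalRing R] [IsArtinianRing R]
    (πR : R →+* k) (hπsurj : Function.Surjective πR)
    (M : Type) [AddCommGroup M] [Module R M] [Module (MonoidAlgebra R G) M]
    [IsScalarTower R (MonoidAlgebra R G) M] [SMulCommClass (MonoidAlgebra R G) R M]
    [Module.Free R M]
    (φ : M →ₛₗ[πR] V) (hφsurj : Function.Surjective φ)
    (hφker : ∀ m : M, φ m = 0 ↔ m ∈ (IsLocalRing.maximalIdeal R) • (⊤ : Submodule R M))
    (hφequiv : ∀ (g : G) (m : M),
      φ ((MonoidAlgebra.of R G g) • m) = (MonoidAlgebra.of k G g) • φ m) :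
    ∀ f : M →ₗ[MonoidAlgebra R G] M, ∃ r : R,
      FactorsThroughProjective (MonoidAlgebra R G)
        (f - r • (LinearMap.id : M →ₗ[MonoidAlgebra R G] M)) := fun f =>
  exists_sub_smul_id_factorsThroughProjective hV.2 hπsurj hφsurj hφker hφequiv ⊤ f
    fun m => by simp

/-- Let `V` be a `kG`-module with stable endomorphism ring `k`, let `R` be an
Artinian local commutative ring with residue field `k`, and let `(M, φ)` be a lift of `V` over
`R`: `M` a finite free `R`-module with `RG`-action and `φ : k ⊗_R M ≅ V` a `G`-equivariant
identification (realized as a surjective `G`-equivariant `πR`-semilinear map `φ : M → V` with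
kernel `m_R·M`). Then the natural map `R → End_{RG}(M)/PEnd_{RG}(M)` given by scalar
multiplication is surjective. -/
theorem scalar_action_surjects_onto_stable_end
    (p : ℕ) [Fact p.Prime] (k : Type) [Field k] [CharP k p]
    (G : Type) [Group G] [Fintype G]
    (V : Type) [AddCommGroup V] [Module k V] [Module (MonoidAlgebra k G) V]
    [IsScalarTower k (MonoidAlgebra k G) V] [SMulCommClass (MonoidAlgebra k G) k V]
    [Module.Finite k V]
    (hV : StableEndTrivial k (MonoidAlgebra k G) V)
    (R : Type) [CommRing R] [IsLocalRing R] [IsArtinianRing R]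
    (πR : R →+* k) (hπsurj : Function.Surjective πR)
    (hπker : RingHom.ker πR = IsLocalRing.maximalIdeal R)
    (M : Type) [AddCommGroup M] [Module R M] [Module (MonoidAlgebra R G) M]
    [IsScalarTower R (MonoidAlgebra R G) M] [SMulCommClass (MonoidAlgebra R G) R M]
    [Module.Free R M] [Module.Finite R M]
    (φ : M →ₛₗ[πR] V) (hφsurj : Function.Surjective φ)
    (hφker : ∀ m : M, φ m = 0 ↔ m ∈ (IsLocalRing.maximalIdeal R) • (⊤ : Submodule R M))
    (hφequiv : ∀ (g : G) (m : M),
      φ ((MonoidAlgebra.of R G g) • m) = (MonoidAlgebra.of k G g) • φ m) :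
    ∀ f : M →ₗ[MonoidAlgebra R G] M, ∃ r : R,
      FactorsThroughProjective (MonoidAlgebra R G)
        (f - r • (LinearMap.id : M →ₗ[MonoidAlgebra R G] M)) :=
  scalar_action_surjects_onto_stable_end_general k G V hV R πR hπsurj M φ hφsurj hφker hφequiv
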